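/- arXiv:2105.00176 — 12 statements merged into one kernel-verified Lean document; each statement's English description precedes it below -/
import Mathlib

section
/- Let φ : S → T be a semigroup homomorphism where S has common weak local units. Then the following are equivalent: (1) φ is injective on every subsemigroup aSb with a ∈ Sa and b ∈ bS; (2) the restriction of φ to sS is injective for every s ∈ S; (3) the restriction of φ to Ss is injective for every s ∈ S. -/
/-- For a semigroup homomorphism `φ : S → T` where `S` has common weak local
units, almost injectivity (injectivity on all `aSb` with `a ∈ Sa`, `b ∈ bS`) is equivalent
to injectivity on every `sS`, and to injectivity on every `Ss`. -/
theorem stmt3 {S T : Type*} [Semigroup S] [Semigroup T]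
    (φ : S → T) (hφ : ∀ x y : S, φ (x * y) = φ x * φ y)
    (hcwlu : ∀ s s' : S, ∃ u v : S,
      u * s = s ∧ u * s' = s' ∧ s * v = s ∧ s' * v = s') :
    ((∀ a b : S, (∃ x, x * a = a) → (∃ y, b * y = b) →
        ∀ s s' : S, φ (a * s * b) = φ (a * s' * b) → a * s * b = a * s' * b)
      ↔ (∀ s x y : S, φ (s * x) = φ (s * y) → s * x = s * y)) ∧
    ((∀ s x y : S, φ (s * x) = φ (s * y) → s * x = s * y)
      ↔ (∀ s x y : S, φ (x * s) = φ (y * s) → x * s = y * s)) := by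
  constructor
  · constructor
    · intro h1 s x y hxy
      obtain ⟨u, v, hu1, hu2, hv1, hv2⟩ := hcwlu (s * x) (s * y)
      obtain ⟨us, _, hus, _, _, _⟩ := hcwlu s s
      obtain ⟨_, v0, _, _, hv0, _⟩ := hcwlu v v
      have key : s * x * v = s * y * v := by
        apply h1 s v ⟨us, hus⟩ ⟨v0, hv0⟩ x y
        rw [hv1, hv2, hxy]
      rwa [hv1, hv2] at key
    · intro h2 a b _ _ s s' heq
      have := h2 a (s * b) (s' * b) (by rwa [← mul_assoc, ← mul_assoc])
      rwa [← mul_assoc, ← mul_assoc] at this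
  · constructor
    · intro h2 s x y hxy
      obtain ⟨u, _, hu1, hu2, _, _⟩ := hcwlu (x * s) (y * s)
      have := h2 u (x * s) (y * s) (by rw [hu1, hu2, hxy])
      rwa [hu1, hu2] at this
    · intro h3 s x y hxy
      obtain ⟨_, v, _, _, hv1, hv2⟩ := hcwlu (s * x) (s * y)
      have := h3 v (s * x) (s * y) (by rw [hv1, hv2, hxy])
      rwa [hv1, hv2] at this
end

section
/- Let τ : T → S be a strict local isomorphism of semigroups (a surjective homomorphism injective on all subsemigroups aTb with a ∈ Ta, b ∈ bT), where T has common weak local units. Then the operation t ⋆ s' := t t', where t' ∈ T is any element with τ(t') = s', is well-defined, makes T into a right S-act, and τ is then a morphism of right S-acts; moreover the original multiplication of T satisfies t t' = t ⋆ τ(t'). -/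
/-- A strict local isomorphism `τ : T → S` with `T` having common weak local
units arises from a right `S`-act structure on `T`: the operation `t ⋆ s' := t t'` where
`τ t' = s'` is well defined, is a right `S`-action, `τ` is an `S`-act morphism, and the
multiplication of `T` satisfies `t t' = t ⋆ τ t'`. -/
theorem stmt4 {S T : Type*} [Semigroup S] [Semigroup T]
    (τ : T → S) (hτ : ∀ x y : T, τ (x * y) = τ x * τ y)
    (hsurj : Function.Surjective τ)
    (hai : ∀ a b : T, (∃ x, x * a = a) → (∃ y, b * y = b) →
      ∀ s s' : T, τ (a * s * b) = τ (a * s' * b) → a * s * b = a * s' * b)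
    (hcwlu : ∀ t t' : T, ∃ u v : T,
      u * t = t ∧ u * t' = t' ∧ t * v = t ∧ t' * v = t') :
    ∃ star : T → S → T,
      (∀ t t' : T, star t (τ t') = t * t') ∧
      (∀ (t : T) (s s' : S), star (star t s) s' = star t (s * s')) ∧
      (∀ (t : T) (s : S), τ (star t s) = τ t * s) ∧
      (∀ t t' : T, t * t' = star t (τ t')) := by
  -- well-definedness: τ t' = τ t'' → t * t' = t * t''
  have key : ∀ t t' t'' : T, τ t' = τ t'' → t * t' = t * t'' := by
    intro t t' t'' h
    obtain ⟨u, v, hu1, hu2, hv1, hv2⟩ := hcwlu t' t''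
    obtain ⟨u', v', _, _, hvv, _⟩ := hcwlu v v
    obtain ⟨ut, _, hut, _, _, _⟩ := hcwlu t t
    have := hai t v ⟨ut, hut⟩ ⟨v', hvv⟩ t' t''
      (by rw [hτ, hτ, hτ, hτ, h])
    rw [mul_assoc, mul_assoc, hv1, hv2] at this
    exact this
  classical
  refine ⟨fun t s => t * Classical.choose (hsurj s), ?_, ?_, ?_, ?_⟩
  · intro t t'
    exact key t _ t' (Classical.choose_spec (hsurj (τ t')))
  · intro t s s'
    have ha := Classical.choose_spec (hsurj s)
    have hb := Classical.choose_spec (hsurj s')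
    have hc := Classical.choose_spec (hsurj (s * s'))
    show t * _ * _ = t * _
    rw [mul_assoc]
    exact (key t _ _ (by rw [hτ, ha, hb, hc])).symm
  · intro t s
    rw [hτ, Classical.choose_spec (hsurj s)]
  · intro t t'
    exact (key t _ t' (Classical.choose_spec (hsurj (τ t')))).symm
end

section
/- Let (S, T, P, Q, θ, φ) be a Morita context connecting nonempty semigroups S and T, and regard P ⊗_T Q as a semigroup via (p ⊗ q)(p' ⊗ q') := p ⊗ q θ(p' ⊗ q'). Then θ : P ⊗_T Q → S is an almost injective semigroup homomorphism, and if θ is surjective then idempotents lift along θ. -/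
/-- The relation generating the tensor product of a right act and a left act:
`(a·m, b) ~ (a, m·b)`. The tensor product is `Quot (TensorRelR ract lact)`. -/
def TensorRelR {A M B : Type*} (ract : A → M → A) (lact : M → B → B) :
    A × B → A × B → Prop :=
  fun x y => ∃ (a : A) (m : M) (b : B), x = (ract a m, b) ∧ y = (a, lact m b)

/-- For a Morita context `(S, T, P, Q, θ, φ)` connecting nonempty semigroups,
with `P ⊗_T Q` as a semigroup via `(p ⊗ q)(p' ⊗ q') := p ⊗ qθ(p' ⊗ q')`, the map `θ` is an
almost injective semigroup homomorphism, and if `θ` is surjective then idempotents lift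
along `θ`. -/
theorem stmt6 {S T P Q : Type*} [Semigroup S] [Semigroup T] [Nonempty S] [Nonempty T]
    (sP : S → P → P) (pT : P → T → P) (tQ : T → Q → Q) (qS : Q → S → Q)
    (hsP : ∀ (s s' : S) (p : P), sP (s * s') p = sP s (sP s' p))
    (hpT : ∀ (p : P) (t t' : T), pT (pT p t) t' = pT p (t * t'))
    (hPbi : ∀ (s : S) (p : P) (t : T), pT (sP s p) t = sP s (pT p t))
    (htQ : ∀ (t t' : T) (q : Q), tQ (t * t') q = tQ t (tQ t' q))
    (hqS : ∀ (q : Q) (s s' : S), qS (qS q s) s' = qS q (s * s'))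
    (hQbi : ∀ (t : T) (q : Q) (s : S), qS (tQ t q) s = tQ t (qS q s))
    (θ : Quot (TensorRelR pT tQ) → S) (φ : Quot (TensorRelR qS sP) → T)
    (hθl : ∀ (s : S) (p : P) (q : Q),
      θ (Quot.mk _ (sP s p, q)) = s * θ (Quot.mk _ (p, q)))
    (hθr : ∀ (p : P) (q : Q) (s : S),
      θ (Quot.mk _ (p, qS q s)) = θ (Quot.mk _ (p, q)) * s)
    (hφl : ∀ (t : T) (q : Q) (p : P),
      φ (Quot.mk _ (tQ t q, p)) = t * φ (Quot.mk _ (q, p)))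
    (hφr : ∀ (q : Q) (p : P) (t : T),
      φ (Quot.mk _ (q, pT p t)) = φ (Quot.mk _ (q, p)) * t)
    (hcomp1 : ∀ (p : P) (q : Q) (p' : P),
      sP (θ (Quot.mk _ (p, q))) p' = pT p (φ (Quot.mk _ (q, p'))))
    (hcomp2 : ∀ (q' : Q) (p : P) (q : Q),
      qS q' (θ (Quot.mk _ (p, q))) = tQ (φ (Quot.mk _ (q', p))) q)
    (mul : Quot (TensorRelR pT tQ) → Quot (TensorRelR pT tQ) → Quot (TensorRelR pT tQ))
    (hmul : ∀ (p : P) (q : Q) (p' : P) (q' : Q),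
      mul (Quot.mk _ (p, q)) (Quot.mk _ (p', q')) =
        Quot.mk _ (p, qS q (θ (Quot.mk _ (p', q'))))) :
    (∀ x y : Quot (TensorRelR pT tQ), θ (mul x y) = θ x * θ y) ∧
    (∀ a b : Quot (TensorRelR pT tQ), (∃ x, mul x a = a) → (∃ y, mul b y = b) →
      ∀ u v : Quot (TensorRelR pT tQ),
        θ (mul (mul a u) b) = θ (mul (mul a v) b) → mul (mul a u) b = mul (mul a v) b) ∧
    (Function.Surjective θ →
      ∀ e : S, e * e = e → ∃ x : Quot (TensorRelR pT tQ), mul x x = x ∧ θ x = e) := by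
  have hmulθ : ∀ x y, θ (mul x y) = θ x * θ y := by
    intro x y
    obtain ⟨⟨p, q⟩, rfl⟩ := Quot.exists_rep x
    obtain ⟨⟨p', q'⟩, rfl⟩ := Quot.exists_rep y
    rw [hmul, hθr]
  have assoc : ∀ x y z, mul (mul x y) z = mul x (mul y z) := by
    intro x y z
    obtain ⟨⟨p, q⟩, rfl⟩ := Quot.exists_rep x
    obtain ⟨⟨p', q'⟩, rfl⟩ := Quot.exists_rep y
    obtain ⟨⟨p'', q''⟩, rfl⟩ := Quot.exists_rep z
    simp only [hmul, hθr, hqS]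
  have key : ∀ x m m' y, θ m = θ m' → mul x (mul m y) = mul x (mul m' y) := by
    intro x m m' y h
    obtain ⟨⟨p, q⟩, rfl⟩ := Quot.exists_rep x
    obtain ⟨⟨pm, qm⟩, rfl⟩ := Quot.exists_rep m
    obtain ⟨⟨pm', qm'⟩, rfl⟩ := Quot.exists_rep m'
    obtain ⟨⟨py, qy⟩, rfl⟩ := Quot.exists_rep y
    simp only [hmul, hθr]
    rw [h]
  refine ⟨hmulθ, ?_, ?_⟩
  · rintro a b ⟨x, hx⟩ ⟨y, hy⟩ u v heq
    have hm : ∀ w, mul (mul a w) b = mul x (mul (mul (mul a w) b) y) := by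
      intro w
      conv_lhs => rw [← hx, ← hy]
      rw [assoc x a w, assoc x (mul a w) (mul b y), ← assoc (mul a w) b y]
    rw [hm u, hm v]
    exact key x _ _ y heq
  · intro hsurj e he
    obtain ⟨x, hxθ⟩ := hsurj e
    refine ⟨mul x x, ?_, by rw [hmulθ, hxθ, he]⟩
    obtain ⟨⟨p, q⟩, rfl⟩ := Quot.exists_rep x
    rw [hmul, hxθ, hmul, hθr, hxθ, hqS, he, he]
end

section
/- Two firm semigroups S and T are strongly Morita equivalent if and only if S is isomorphic (as a semigroup) to a surjectively defined Morita semigroup over T. -/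
/-- `act` is a right `M`-act structure. -/
def IsRightAct {M A : Type*} [Semigroup M] (act : A → M → A) : Prop :=
  ∀ (a : A) (m m' : M), act (act a m) m' = act a (m * m')

/-- `act` is a left `M`-act structure. -/
def IsLeftAct {M A : Type*} [Semigroup M] (act : M → A → A) : Prop :=
  ∀ (m m' : M) (a : A), act (m * m') a = act m (act m' a)

/-- The canonical map `S ⊗_S S → S`, `s ⊗ s' ↦ ss'`. -/
def firmMap (S : Type*) [Semigroup S] :
    Quot (TensorRelR ((· * ·) : S → S → S) ((· * ·) : S → S → S)) → S :=
  Quot.lift (fun x => x.1 * x.2)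
    (fun _ _ h => by obtain ⟨a, m, b, rfl, rfl⟩ := h; exact mul_assoc a m b)

/-- A semigroup is firm if `S ⊗_S S → S`, `s ⊗ s' ↦ ss'`, is bijective. -/
def IsFirm (S : Type*) [Semigroup S] : Prop :=
  Function.Bijective (firmMap S)

/-- `S` and `T` are strongly Morita equivalent: they are connected by a unitary Morita
context `(S, T, P, Q, θ, φ)` with `θ` and `φ` surjective. -/
def StronglyMoritaEquivalent (S T : Type) [Semigroup S] [Semigroup T] : Prop :=
  ∃ (P Q : Type) (sP : S → P → P) (pT : P → T → P) (tQ : T → Q → Q) (qS : Q → S → Q),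
    IsLeftAct sP ∧ IsRightAct pT ∧
    (∀ (s : S) (p : P) (t : T), pT (sP s p) t = sP s (pT p t)) ∧
    IsLeftAct tQ ∧ IsRightAct qS ∧
    (∀ (t : T) (q : Q) (s : S), qS (tQ t q) s = tQ t (qS q s)) ∧
    (∀ p : P, ∃ (s : S) (p' : P), p = sP s p') ∧
    (∀ p : P, ∃ (p' : P) (t : T), p = pT p' t) ∧
    (∀ q : Q, ∃ (t : T) (q' : Q), q = tQ t q') ∧
    (∀ q : Q, ∃ (q' : Q) (s : S), q = qS q' s) ∧
    ∃ (θ : Quot (TensorRelR pT tQ) → S) (φ : Quot (TensorRelR qS sP) → T),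
      (∀ (s : S) (p : P) (q : Q),
        θ (Quot.mk _ (sP s p, q)) = s * θ (Quot.mk _ (p, q))) ∧
      (∀ (p : P) (q : Q) (s : S),
        θ (Quot.mk _ (p, qS q s)) = θ (Quot.mk _ (p, q)) * s) ∧
      (∀ (t : T) (q : Q) (p : P),
        φ (Quot.mk _ (tQ t q, p)) = t * φ (Quot.mk _ (q, p))) ∧
      (∀ (q : Q) (p : P) (t : T),
        φ (Quot.mk _ (q, pT p t)) = φ (Quot.mk _ (q, p)) * t) ∧
      (∀ (p : P) (q : Q) (p' : P),
        sP (θ (Quot.mk _ (p, q))) p' = pT p (φ (Quot.mk _ (q, p')))) ∧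
      (∀ (q' : Q) (p : P) (q : Q),
        qS q' (θ (Quot.mk _ (p, q))) = tQ (φ (Quot.mk _ (q', p))) q) ∧
      Function.Surjective θ ∧ Function.Surjective φ

/-- `S` is isomorphic, as a semigroup, to a surjectively defined Morita semigroup over
`T`, i.e. to some `Q ⊗_T P` with multiplication `(q ⊗ p)(q' ⊗ p') = q ⊗ ⟨p, q'⟩p'`
induced by a surjective `(T,T)`-biact morphism `⟨,⟩ : P × Q → T`. -/
def IsoToSurjDefMoritaSemigroup (S T : Type) [Semigroup S] [Semigroup T] : Prop :=
  ∃ (P Q : Type) (tP : T → P → P) (qT : Q → T → Q),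
    IsLeftAct tP ∧ IsRightAct qT ∧
    ∃ br : P → Q → T,
      (∀ (t : T) (p : P) (q : Q), br (tP t p) q = t * br p q) ∧
      (∀ (p : P) (q : Q) (t : T), br p (qT q t) = br p q * t) ∧
      (∀ t : T, ∃ (p : P) (q : Q), br p q = t) ∧
      ∃ mul : Quot (TensorRelR qT tP) → Quot (TensorRelR qT tP) → Quot (TensorRelR qT tP),
        (∀ (q : Q) (p : P) (q' : Q) (p' : P),
          mul (Quot.mk _ (q, p)) (Quot.mk _ (q', p')) =
            Quot.mk _ (q, tP (br p q') p')) ∧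
        ∃ f : Quot (TensorRelR qT tP) → S,
          Function.Bijective f ∧ ∀ x y, f (mul x y) = f x * f y

theorem stmt7_fwd (S T : Type) [Semigroup S] [Semigroup T]
    (hS : IsFirm S)
    (P Q : Type) (sP : S → P → P) (pT : P → T → P) (tQ : T → Q → Q) (qS : Q → S → Q)
    (hsP : IsLeftAct sP) (hpT : IsRightAct pT)
    (hST : ∀ (s : S) (p : P) (t : T), pT (sP s p) t = sP s (pT p t))
    (htQ : IsLeftAct tQ) (hqS : IsRightAct qS)
    (hTS : ∀ (t : T) (q : Q) (s : S), qS (tQ t q) s = tQ t (qS q s))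
    (hUP1 : ∀ p : P, ∃ (s : S) (p' : P), p = sP s p')
    (θ : Quot (TensorRelR pT tQ) → S) (φ : Quot (TensorRelR qS sP) → T)
    (hθ1 : ∀ (s : S) (p : P) (q : Q),
        θ (Quot.mk _ (sP s p, q)) = s * θ (Quot.mk _ (p, q)))
    (hθ2 : ∀ (p : P) (q : Q) (s : S),
        θ (Quot.mk _ (p, qS q s)) = θ (Quot.mk _ (p, q)) * s)
    (hφ1 : ∀ (t : T) (q : Q) (p : P),
        φ (Quot.mk _ (tQ t q, p)) = t * φ (Quot.mk _ (q, p)))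
    (hφ2 : ∀ (q : Q) (p : P) (t : T),
        φ (Quot.mk _ (q, pT p t)) = φ (Quot.mk _ (q, p)) * t)
    (hC1 : ∀ (p : P) (q : Q) (p' : P),
        sP (θ (Quot.mk _ (p, q))) p' = pT p (φ (Quot.mk _ (q, p'))))
    (hC2 : ∀ (q' : Q) (p : P) (q : Q),
        qS q' (θ (Quot.mk _ (p, q))) = tQ (φ (Quot.mk _ (q', p))) q)
    (hθs : Function.Surjective θ) (hφs : Function.Surjective φ) :
    ∃ (P' Q' : Type) (tP' : T → P' → P') (qT' : Q' → T → Q'),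
    IsLeftAct tP' ∧ IsRightAct qT' ∧
    ∃ br : P' → Q' → T,
      (∀ (t : T) (p : P') (q : Q'), br (tP' t p) q = t * br p q) ∧
      (∀ (p : P') (q : Q') (t : T), br p (qT' q t) = br p q * t) ∧
      (∀ t : T, ∃ (p : P') (q : Q'), br p q = t) ∧
      ∃ mul : Quot (TensorRelR qT' tP') → Quot (TensorRelR qT' tP') → Quot (TensorRelR qT' tP'),
        (∀ (q : Q') (p : P') (q' : Q') (p' : P'),
          mul (Quot.mk _ (q, p)) (Quot.mk _ (q', p')) =
            Quot.mk _ (q, tP' (br p q') p')) ∧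
        ∃ f : Quot (TensorRelR qT' tP') → S,
          Function.Bijective f ∧ ∀ x y, f (mul x y) = f x * f y := by
  classical
  -- target: P' = Q, Q' = P, tP' = tQ, qT' = pT, br q p = φ (q ⊗ p)
  have brsurj : ∀ t : T, ∃ (q : Q) (p : P), φ (Quot.mk _ (q, p)) = t := by
    intro t
    obtain ⟨x, hx⟩ := hφs t
    obtain ⟨⟨q, p⟩, hqp⟩ := Quot.exists_rep x
    exact ⟨q, p, by rw [hqp]; exact hx⟩
  -- multiplication on M = P ⊗_T Q
  have hg2 : ∀ (x y y' : P × Q), TensorRelR pT tQ y y' →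
      (Quot.mk (TensorRelR pT tQ) (x.1, tQ (φ (Quot.mk _ (x.2, y.1))) y.2)) =
      Quot.mk (TensorRelR pT tQ) (x.1, tQ (φ (Quot.mk _ (x.2, y'.1))) y'.2) := by
    rintro x _ _ ⟨a, m, b, rfl, rfl⟩
    show Quot.mk _ (x.1, tQ (φ (Quot.mk _ (x.2, pT a m))) b) =
      Quot.mk _ (x.1, tQ (φ (Quot.mk _ (x.2, a))) (tQ m b))
    rw [hφ2, htQ]
  let mulM : Quot (TensorRelR pT tQ) → Quot (TensorRelR pT tQ) → Quot (TensorRelR pT tQ) :=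
    Quot.lift
      (fun x => Quot.lift
        (fun y => Quot.mk (TensorRelR pT tQ) (x.1, tQ (φ (Quot.mk _ (x.2, y.1))) y.2))
        (hg2 x))
      (by
        rintro _ _ ⟨a, m, b, rfl, rfl⟩
        funext y
        induction y using Quot.ind with | _ y =>
        show Quot.mk _ (pT a m, tQ (φ (Quot.mk _ (b, y.1))) y.2) =
          Quot.mk _ (a, tQ (φ (Quot.mk _ (tQ m b, y.1))) y.2)
        rw [hφ1, htQ]
        exact Quot.sound ⟨a, m, _, rfl, rfl⟩)
  -- the right S-action on M
  have hract2 : ∀ (s : S) (x y : P × Q), TensorRelR pT tQ x y →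
      (Quot.mk (TensorRelR pT tQ) (x.1, qS x.2 s)) = Quot.mk (TensorRelR pT tQ) (y.1, qS y.2 s) := by
    rintro s _ _ ⟨a, m, b, rfl, rfl⟩
    show Quot.mk _ (pT a m, qS b s) = Quot.mk _ (a, qS (tQ m b) s)
    rw [hTS]
    exact Quot.sound ⟨a, m, _, rfl, rfl⟩
  let ract : Quot (TensorRelR pT tQ) → S → Quot (TensorRelR pT tQ) := fun x s =>
    Quot.lift (fun z => Quot.mk (TensorRelR pT tQ) (z.1, qS z.2 s)) (hract2 s) x
  have hC : ∀ (x : Quot (TensorRelR pT tQ)) (p : P) (q : Q),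
      ract x (θ (Quot.mk _ (p, q))) = Quot.mk _ (sP (θ x) p, q) := by
    intro x p q
    induction x using Quot.ind with | _ z =>
    obtain ⟨p0, q0⟩ := z
    show Quot.mk _ (p0, qS q0 (θ (Quot.mk _ (p, q)))) = _
    rw [hC2, hC1]
    exact (Quot.sound ⟨p0, _, q, rfl, rfl⟩).symm
  have hB : ∀ (x y : Quot (TensorRelR pT tQ)) (b : S), θ x = θ y → ract x b = ract y b := by
    intro x y b hxy
    obtain ⟨w, hw⟩ := hθs b
    induction w using Quot.ind with | _ z =>
    obtain ⟨p, q⟩ := z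
    rw [← hw, hC, hC, hxy]
  have h1 : ∀ (x : Quot (TensorRelR pT tQ)) (u v : S), ract x (u * v) = ract (ract x u) v := by
    intro x u v
    induction x using Quot.ind with | _ z =>
    show Quot.mk _ (z.1, qS z.2 (u * v)) = Quot.mk _ (z.1, qS (qS z.2 u) v)
    rw [hqS]
  have h2 : ∀ (x : Quot (TensorRelR pT tQ)) (u : S), θ (ract x u) = θ x * u := by
    intro x u
    induction x using Quot.ind with | _ z =>
    obtain ⟨p, q⟩ := z
    exact hθ2 p q u
  let sec : S → Quot (TensorRelR pT tQ) := fun a => Classical.choose (hθs a)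
  have hsec : ∀ a, θ (sec a) = a := fun a => Classical.choose_spec (hθs a)
  have hFcong : ∀ z w, TensorRelR (fun a b : S => a * b) (fun a b : S => a * b) z w →
      ract (sec z.1) z.2 = ract (sec w.1) w.2 := by
    rintro _ _ ⟨a, m, b, rfl, rfl⟩
    show ract (sec (a * m)) b = ract (sec a) (m * b)
    rw [h1 (sec a) m b]
    exact hB _ _ b (by rw [hsec, h2, hsec])
  let F : Quot (TensorRelR ((· * ·) : S → S → S) ((· * ·) : S → S → S)) →
      Quot (TensorRelR pT tQ) :=
    Quot.lift (fun z => ract (sec z.1) z.2) hFcong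
  have hθinj : Function.Injective θ := by
    intro x y hxy
    induction x using Quot.ind with | _ z =>
    induction y using Quot.ind with | _ w =>
    obtain ⟨p, q⟩ := z
    obtain ⟨p', q'⟩ := w
    obtain ⟨s, p₁, rfl⟩ := hUP1 p
    obtain ⟨s', p₁', rfl⟩ := hUP1 p'
    have e1 : Quot.mk (TensorRelR pT tQ) (sP s p₁, q) =
        F (Quot.mk _ (s, θ (Quot.mk _ (p₁, q)))) := by
      show _ = ract (sec s) _
      rw [hC, hsec]
    have e2 : Quot.mk (TensorRelR pT tQ) (sP s' p₁', q') =
        F (Quot.mk _ (s', θ (Quot.mk _ (p₁', q')))) := by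
      show _ = ract (sec s') _
      rw [hC, hsec]
    have e3 : Quot.mk (TensorRelR ((· * ·) : S → S → S) ((· * ·) : S → S → S))
          (s, θ (Quot.mk _ (p₁, q))) =
        Quot.mk _ (s', θ (Quot.mk _ (p₁', q'))) := by
      apply hS.1
      show s * θ (Quot.mk _ (p₁, q)) = s' * θ (Quot.mk _ (p₁', q'))
      rw [← hθ1, ← hθ1]
      exact hxy
    rw [e1, e2, e3]
  refine ⟨Q, P, tQ, pT, htQ, hpT, fun q p => φ (Quot.mk _ (q, p)),
    fun t q p => hφ1 t q p, fun q p t => hφ2 q p t, brsurj, mulM, fun q p q' p' => rfl,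
    θ, ⟨hθinj, hθs⟩, ?_⟩
  intro x y
  induction x using Quot.ind with | _ z =>
  induction y using Quot.ind with | _ w =>
  obtain ⟨p, q⟩ := z
  obtain ⟨p', q'⟩ := w
  show θ (Quot.mk _ (p, tQ (φ (Quot.mk _ (q, p'))) q')) = _
  rw [← hC2, hθ2]


theorem stmt7_bwd (S T : Type) [Semigroup S] [Semigroup T]
    (hS : IsFirm S) (hT : IsFirm T)
    (P Q : Type) (tP : T → P → P) (qT : Q → T → Q)
    (htP : IsLeftAct tP) (hqT : IsRightAct qT)
    (br : P → Q → T)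
    (hbr1 : ∀ (t : T) (p : P) (q : Q), br (tP t p) q = t * br p q)
    (hbr2 : ∀ (p : P) (q : Q) (t : T), br p (qT q t) = br p q * t)
    (hbrs : ∀ t : T, ∃ (p : P) (q : Q), br p q = t)
    (mul : Quot (TensorRelR qT tP) → Quot (TensorRelR qT tP) → Quot (TensorRelR qT tP))
    (hmul : ∀ (q : Q) (p : P) (q' : Q) (p' : P),
          mul (Quot.mk _ (q, p)) (Quot.mk _ (q', p')) =
            Quot.mk _ (q, tP (br p q') p'))
    (f : Quot (TensorRelR qT tP) → S)
    (hf : Function.Bijective f) (hfm : ∀ x y, f (mul x y) = f x * f y) :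
    ∃ (P' Q' : Type) (sP : S → P' → P') (pT : P' → T → P') (tQ : T → Q' → Q') (qS : Q' → S → Q'),
    IsLeftAct sP ∧ IsRightAct pT ∧
    (∀ (s : S) (p : P') (t : T), pT (sP s p) t = sP s (pT p t)) ∧
    IsLeftAct tQ ∧ IsRightAct qS ∧
    (∀ (t : T) (q : Q') (s : S), qS (tQ t q) s = tQ t (qS q s)) ∧
    (∀ p : P', ∃ (s : S) (p' : P'), p = sP s p') ∧
    (∀ p : P', ∃ (p' : P') (t : T), p = pT p' t) ∧
    (∀ q : Q', ∃ (t : T) (q' : Q'), q = tQ t q') ∧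
    (∀ q : Q', ∃ (q' : Q') (s : S), q = qS q' s) ∧
    ∃ (θ : Quot (TensorRelR pT tQ) → S) (φ : Quot (TensorRelR qS sP) → T),
      (∀ (s : S) (p : P') (q : Q'),
        θ (Quot.mk _ (sP s p, q)) = s * θ (Quot.mk _ (p, q))) ∧
      (∀ (p : P') (q : Q') (s : S),
        θ (Quot.mk _ (p, qS q s)) = θ (Quot.mk _ (p, q)) * s) ∧
      (∀ (t : T) (q : Q') (p : P'),
        φ (Quot.mk _ (tQ t q, p)) = t * φ (Quot.mk _ (q, p))) ∧
      (∀ (q : Q') (p : P') (t : T),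
        φ (Quot.mk _ (q, pT p t)) = φ (Quot.mk _ (q, p)) * t) ∧
      (∀ (p : P') (q : Q') (p' : P'),
        sP (θ (Quot.mk _ (p, q))) p' = pT p (φ (Quot.mk _ (q, p')))) ∧
      (∀ (q' : Q') (p : P') (q : Q'),
        qS q' (θ (Quot.mk _ (p, q))) = tQ (φ (Quot.mk _ (q', p))) q) ∧
      Function.Surjective θ ∧ Function.Surjective φ := by
  classical
  set e := Equiv.ofBijective f hf with he
  have hfg : ∀ s, f (e.symm s) = s := fun s => e.apply_symm_apply s
  have hgf : ∀ m, e.symm (f m) = m := fun m => e.symm_apply_apply m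
  have hTfirm : ∀ t : T, ∃ a b : T, a * b = t := by
    intro t
    obtain ⟨x, hx⟩ := hT.2 t
    obtain ⟨⟨a, b⟩, rfl⟩ := Quot.exists_rep x
    exact ⟨a, b, hx⟩
  have hSfirm : ∀ s : S, ∃ a b : S, a * b = s := by
    intro s
    obtain ⟨x, hx⟩ := hS.2 s
    obtain ⟨⟨a, b⟩, rfl⟩ := Quot.exists_rep x
    exact ⟨a, b, hx⟩
  have hMfirm : ∀ m : Quot (TensorRelR qT tP), ∃ m₁ m₂, mul m₁ m₂ = m := by
    intro m
    obtain ⟨a, b, hab⟩ := hSfirm (f m)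
    refine ⟨e.symm a, e.symm b, hf.1 ?_⟩
    rw [hfm, hfg, hfg, hab]
  have hMrep : ∀ m : Quot (TensorRelR qT tP),
      ∃ (q : Q) (t₁ t₂ : T) (p : P), m = Quot.mk _ (qT q t₁, tP t₂ p) := by
    intro m
    obtain ⟨m₁, m₂, rfl⟩ := hMfirm m
    obtain ⟨⟨q₁, p₁⟩, rfl⟩ := Quot.exists_rep m₁
    obtain ⟨⟨q₂, p₂⟩, rfl⟩ := Quot.exists_rep m₂
    obtain ⟨t₁, t₂, ht⟩ := hTfirm (br p₁ q₂)
    refine ⟨q₁, t₁, t₂, p₂, ?_⟩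
    rw [hmul, ← ht, htP]
    exact (Quot.sound ⟨q₁, t₁, tP t₂ p₂, rfl, rfl⟩).symm
  -- actions of M on Q and P
  let actQ : Quot (TensorRelR qT tP) → Q → Q := fun m q =>
    Quot.lift (fun x => qT x.1 (br x.2 q))
      (by rintro _ _ ⟨a, m', b, rfl, rfl⟩
          show qT (qT a m') (br b q) = qT a (br (tP m' b) q)
          rw [hqT, hbr1]) m
  let actP : Quot (TensorRelR qT tP) → P → P := fun m p =>
    Quot.lift (fun x => tP (br p x.1) x.2)
      (by rintro _ _ ⟨a, m', b, rfl, rfl⟩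
          show tP (br p (qT a m')) b = tP (br p a) (tP m' b)
          rw [hbr2, htP]) m
  have hesymmMul : ∀ s s', e.symm (s * s') = mul (e.symm s) (e.symm s') := by
    intro s s'
    apply hf.1
    rw [hfg, hfm, hfg, hfg]
  have actQmul : ∀ m m' q, actQ (mul m m') q = actQ m (actQ m' q) := by
    intro m m' q
    induction m using Quot.ind with | _ z =>
    induction m' using Quot.ind with | _ w =>
    obtain ⟨q₁, p₁⟩ := z
    obtain ⟨q₂, p₂⟩ := w
    rw [hmul]
    show qT q₁ (br (tP (br p₁ q₂) p₂) q) = qT q₁ (br p₁ (qT q₂ (br p₂ q)))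
    rw [hbr1, hbr2]
  have actPmul : ∀ m m' p, actP (mul m m') p = actP m' (actP m p) := by
    intro m m' p
    induction m using Quot.ind with | _ z =>
    induction m' using Quot.ind with | _ w =>
    obtain ⟨q₁, p₁⟩ := z
    obtain ⟨q₂, p₂⟩ := w
    rw [hmul]
    show tP (br p q₁) (tP (br p₁ q₂) p₂) = tP (br (tP (br p q₁) p₁) q₂) p₂
    rw [hbr1, htP]
  have commQ : ∀ m q t, qT (actQ m q) t = actQ m (qT q t) := by
    intro m q t
    induction m using Quot.ind with | _ z =>
    obtain ⟨q₁, p₁⟩ := z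
    show qT (qT q₁ (br p₁ q)) t = qT q₁ (br p₁ (qT q t))
    rw [hqT, hbr2]
  have commP : ∀ m t p, actP m (tP t p) = tP t (actP m p) := by
    intro m t p
    induction m using Quot.ind with | _ z =>
    obtain ⟨q₁, p₁⟩ := z
    show tP (br (tP t p) q₁) p₁ = tP t (tP (br p q₁) p₁)
    rw [hbr1, htP]
  have memQ : ∀ m q, ∃ q₀ t, actQ m q = qT q₀ t := by
    intro m q
    induction m using Quot.ind with | _ z =>
    exact ⟨z.1, br z.2 q, rfl⟩
  have memP : ∀ m p, ∃ t p₀, actP m p = tP t p₀ := by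
    intro m p
    induction m using Quot.ind with | _ z =>
    exact ⟨br p z.1, z.2, rfl⟩
  refine ⟨{q : Q // ∃ q₀ t, q = qT q₀ t}, {p : P // ∃ t p₀, p = tP t p₀},
    fun s q => ⟨actQ (e.symm s) q.1, memQ _ _⟩,
    fun q t => ⟨qT q.1 t, q.1, t, rfl⟩,
    fun t p => ⟨tP t p.1, t, p.1, rfl⟩,
    fun p s => ⟨actP (e.symm s) p.1, memP _ _⟩,
    ?_, ?_, ?_, ?_, ?_, ?_, ?_, ?_, ?_, ?_, ?_⟩
  · intro s s' q
    apply Subtype.ext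
    show actQ (e.symm (s * s')) q.1 = actQ (e.symm s) (actQ (e.symm s') q.1)
    rw [hesymmMul, actQmul]
  · intro a m m'
    exact Subtype.ext (hqT a.1 m m')
  · intro s p t
    exact Subtype.ext (commQ (e.symm s) p.1 t)
  · intro m m' a
    exact Subtype.ext (htP m m' a.1)
  · intro p s s'
    apply Subtype.ext
    show actP (e.symm s') (actP (e.symm s) p.1) = actP (e.symm (s * s')) p.1
    rw [hesymmMul, actPmul]
  · intro t p s
    exact Subtype.ext (commP (e.symm s) t p.1)
  · -- P' = S P'
    rintro ⟨q, q₀, t, rfl⟩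
    obtain ⟨x, y, hxy⟩ := hTfirm t
    obtain ⟨x₁, x₂, hx⟩ := hTfirm x
    obtain ⟨p₂, q₂, hb⟩ := hbrs x₂
    refine ⟨f (Quot.mk _ (qT q₀ x₁, p₂)), ⟨qT q₂ y, q₂, y, rfl⟩, Subtype.ext ?_⟩
    show qT q₀ t = actQ (e.symm (f (Quot.mk _ (qT q₀ x₁, p₂)))) (qT q₂ y)
    rw [hgf]
    show qT q₀ t = qT (qT q₀ x₁) (br p₂ (qT q₂ y))
    rw [hbr2, hb, hqT, ← mul_assoc, hx, hxy]
  · -- P' = P' T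
    rintro ⟨q, q₀, t, rfl⟩
    obtain ⟨a, b, hab⟩ := hTfirm t
    exact ⟨⟨qT q₀ a, q₀, a, rfl⟩, b,
      Subtype.ext (by show qT q₀ t = qT (qT q₀ a) b; rw [hqT, hab])⟩
  · -- Q' = T Q'
    rintro ⟨p, t, p₀, rfl⟩
    obtain ⟨a, b, hab⟩ := hTfirm t
    exact ⟨a, ⟨tP b p₀, b, p₀, rfl⟩,
      Subtype.ext (by show tP t p₀ = tP a (tP b p₀); rw [← htP, hab])⟩
  · -- Q' = Q' S
    rintro ⟨p, t, p₀, rfl⟩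
    obtain ⟨a, b, hab⟩ := hTfirm t
    obtain ⟨a₁, a₂, ha⟩ := hTfirm a
    obtain ⟨p₃, q₃, hb3⟩ := hbrs a₂
    refine ⟨⟨tP a₁ p₃, a₁, p₃, rfl⟩, f (Quot.mk _ (q₃, tP b p₀)), Subtype.ext ?_⟩
    show tP t p₀ = actP (e.symm (f (Quot.mk _ (q₃, tP b p₀)))) (tP a₁ p₃)
    rw [hgf]
    show tP t p₀ = tP (br (tP a₁ p₃) q₃) (tP b p₀)
    rw [hbr1, hb3, ← htP, ha, hab]
  · -- θ and φ
    refine ⟨Quot.lift (fun x => f (Quot.mk _ (x.1.1, x.2.1)))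
        (by rintro _ _ ⟨a, m, b, rfl, rfl⟩
            exact congrArg f (Quot.sound ⟨a.1, m, b.1, rfl, rfl⟩)),
      Quot.lift (fun x => br x.1.1 x.2.1)
        (by rintro _ _ ⟨a, m, b, rfl, rfl⟩
            show br (actP (e.symm m) a.1) b.1 = br a.1 (actQ (e.symm m) b.1)
            obtain ⟨⟨q₁, p₁⟩, hrep⟩ := Quot.exists_rep (e.symm m)
            rw [← hrep]
            show br (tP (br a.1 q₁) p₁) b.1 = br a.1 (qT q₁ (br p₁ b.1))
            rw [hbr1, hbr2]),
      ?_, ?_, ?_, ?_, ?_, ?_, ?_, ?_⟩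
    · intro s pc qc
      show f (Quot.mk _ (actQ (e.symm s) pc.1, qc.1)) = s * f (Quot.mk _ (pc.1, qc.1))
      obtain ⟨⟨q₁, p₁⟩, hrep⟩ := Quot.exists_rep (e.symm s)
      have hs : s = f (Quot.mk _ (q₁, p₁)) := by rw [hrep, hfg]
      rw [← hrep]
      show f (Quot.mk _ (qT q₁ (br p₁ pc.1), qc.1)) = s * f (Quot.mk _ (pc.1, qc.1))
      have key : Quot.mk (TensorRelR qT tP) (qT q₁ (br p₁ pc.1), qc.1) =
          mul (Quot.mk _ (q₁, p₁)) (Quot.mk _ (pc.1, qc.1)) := by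
        rw [hmul]
        exact Quot.sound ⟨q₁, br p₁ pc.1, qc.1, rfl, rfl⟩
      rw [key, hfm, ← hs]
    · intro pc qc s
      show f (Quot.mk _ (pc.1, actP (e.symm s) qc.1)) = f (Quot.mk _ (pc.1, qc.1)) * s
      obtain ⟨⟨q₁, p₁⟩, hrep⟩ := Quot.exists_rep (e.symm s)
      have hs : s = f (Quot.mk _ (q₁, p₁)) := by rw [hrep, hfg]
      rw [← hrep]
      show f (Quot.mk _ (pc.1, tP (br qc.1 q₁) p₁)) = f (Quot.mk _ (pc.1, qc.1)) * s
      rw [← hmul, hfm, ← hs]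
    · intro t qc pc
      exact hbr1 t qc.1 pc.1
    · intro qc pc t
      exact hbr2 qc.1 pc.1 t
    · intro pc qc pc'
      apply Subtype.ext
      show actQ (e.symm (f (Quot.mk _ (pc.1, qc.1)))) pc'.1 = qT pc.1 (br qc.1 pc'.1)
      rw [hgf]
    · intro qc' pc qc
      apply Subtype.ext
      show actP (e.symm (f (Quot.mk _ (pc.1, qc.1)))) qc'.1 = tP (br qc'.1 pc.1) qc.1
      rw [hgf]
    · intro s
      obtain ⟨q, t₁, t₂, p, hm⟩ := hMrep (e.symm s)
      refine ⟨Quot.mk _ (⟨qT q t₁, q, t₁, rfl⟩, ⟨tP t₂ p, t₂, p, rfl⟩), ?_⟩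
      show f (Quot.mk _ (qT q t₁, tP t₂ p)) = s
      rw [← hm, hfg]
    · intro τ
      obtain ⟨a, b, hab⟩ := hTfirm τ
      obtain ⟨a₁, a₂, ha⟩ := hTfirm a
      obtain ⟨p, q, hpq⟩ := hbrs a₂
      refine ⟨Quot.mk _ (⟨tP a₁ p, a₁, p, rfl⟩, ⟨qT q b, q, b, rfl⟩), ?_⟩
      show br (tP a₁ p) (qT q b) = τ
      rw [hbr1, hbr2, hpq, ← mul_assoc, ha, hab]


/-- Two firm semigroups `S and T` are strongly Morita equivalent iff `S` is
isomorphic to a surjectively defined Morita semigroup over `T`. -/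
theorem stmt7 (S T : Type) [Semigroup S] [Semigroup T]
    (hS : IsFirm S) (hT : IsFirm T) :
    StronglyMoritaEquivalent S T ↔ IsoToSurjDefMoritaSemigroup S T := by
  constructor
  · rintro ⟨P, Q, sP, pT, tQ, qS, hsP, hpT, hST, htQ, hqS, hTS, hUP1, hUP2, hUQ1, hUQ2,
      θ, φ, hθ1, hθ2, hφ1, hφ2, hC1, hC2, hθs, hφs⟩
    exact stmt7_fwd S T hS P Q sP pT tQ qS hsP hpT hST htQ hqS hTS hUP1 θ φ
      hθ1 hθ2 hφ1 hφ2 hC1 hC2 hθs hφs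
  · rintro ⟨P, Q, tP, qT, htP, hqT, br, hbr1, hbr2, hbrs, mul, hmul, f, hf, hfm⟩
    exact stmt7_bwd S T hS hT P Q tP qT htP hqT br hbr1 hbr2 hbrs mul hmul f hf hfm
end

section
/- Let S be a factorizable semigroup and M = M(S; U, V; p) a Rees matrix semigroup over S. Set Q := U × S as a right S-act and P := S × V as a left S-act, with biact morphism ⟨(s,v),(u,s')⟩ := s p(v,u) s'. Then the map ψ : Q ⊗_S P → M, (u,s) ⊗ (t,v) ↦ (u, st, v), is a well-defined surjective strict local isomorphism of semigroups along which idempotents lift. -/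
/-- Right `S`-action on `Q = U × S`: `(u, s)s' = (u, ss')`. -/
def reesRact (U : Type*) {S : Type*} [Semigroup S] : U × S → S → U × S :=
  fun q s => (q.1, q.2 * s)

/-- Left `S`-action on `P = S × V`: `s'(s, v) = (s's, v)`. -/
def reesLact (V : Type*) {S : Type*} [Semigroup S] : S → S × V → S × V :=
  fun s x => (s * x.1, x.2)

/-- The biact morphism `⟨(s, v), (u, s')⟩ = s p(v, u) s'`. -/
def reesBr {S U V : Type*} [Semigroup S] (p : V → U → S) : S × V → U × S → S :=
  fun x q => x.1 * p x.2 q.1 * q.2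

/-- Multiplication of the Rees matrix semigroup `M(S; U, V; p)`:
`(u, s, v)(u', s', v') = (u, s p(v, u') s', v')`. -/
def reesMul {S U V : Type*} [Semigroup S] (p : V → U → S) :
    U × S × V → U × S × V → U × S × V :=
  fun x y => (x.1, x.2.1 * p x.2.2 y.1 * y.2.1, y.2.2)

/-- Key relation in the tensor product: `(u, s) ⊗ (m t, v) = (u, s m) ⊗ (t, v)`. -/
lemma tensorShift {S U V : Type*} [Semigroup S] (u : U) (s m t : S) (v : V) :
    Quot.mk (TensorRelR (reesRact U) (reesLact V)) ((u, s), (m * t, v)) =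
      Quot.mk (TensorRelR (reesRact U) (reesLact V)) ((u, s * m), (t, v)) :=
  (Quot.sound ⟨(u, s), m, (t, v), rfl, rfl⟩).symm

/-- For a factorizable semigroup `S` and Rees matrix semigroup
`M = M(S; U, V; p)`, with `Q = U × S`, `P = S × V` and the Morita semigroup `Q ⊗_S P`
defined by `⟨(s,v),(u,s')⟩ = s p(v,u) s'`, the map `ψ : Q ⊗_S P → M`,
`(u,s) ⊗ (t,v) ↦ (u, st, v)`, is a well-defined surjective strict local isomorphism of
semigroups along which idempotents lift. -/
theorem stmt8 {S U V : Type*} [Semigroup S] (p : V → U → S)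
    (hfact : ∀ s : S, ∃ a b : S, s = a * b)
    (mul : Quot (TensorRelR (reesRact U) (reesLact V)) →
      Quot (TensorRelR (reesRact U) (reesLact V)) →
      Quot (TensorRelR (reesRact U) (reesLact V)))
    (hmul : ∀ (u : U) (s t : S) (v : V) (u' : U) (s' t' : S) (v' : V),
      mul (Quot.mk _ ((u, s), (t, v))) (Quot.mk _ ((u', s'), (t', v'))) =
        Quot.mk _ ((u, s), reesLact V (reesBr p (t, v) (u', s')) (t', v'))) :
    ∃ ψ : Quot (TensorRelR (reesRact U) (reesLact V)) → U × S × V,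
      (∀ (u : U) (s t : S) (v : V), ψ (Quot.mk _ ((u, s), (t, v))) = (u, s * t, v)) ∧
      Function.Surjective ψ ∧
      (∀ x y, ψ (mul x y) = reesMul p (ψ x) (ψ y)) ∧
      (∀ a b, (∃ x, mul x a = a) → (∃ y, mul b y = b) →
        ∀ x y, ψ (mul (mul a x) b) = ψ (mul (mul a y) b) →
          mul (mul a x) b = mul (mul a y) b) ∧
      (∀ m : U × S × V, reesMul p m m = m → ∃ x, mul x x = x ∧ ψ x = m) := by
  classical
  -- well-definedness of ψ
  have hf : ∀ x y : (U × S) × (S × V), TensorRelR (reesRact U) (reesLact V) x y →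
      (x.1.1, x.1.2 * x.2.1, x.2.2) = ((y.1.1 : U), y.1.2 * y.2.1, y.2.2) := by
    rintro _ _ ⟨a, m, b, rfl, rfl⟩
    simp [reesRact, reesLact, mul_assoc]
  set ψ : Quot (TensorRelR (reesRact U) (reesLact V)) → U × S × V :=
    Quot.lift (fun q => (q.1.1, q.1.2 * q.2.1, q.2.2)) hf with hψdef
  have hspec : ∀ (u : U) (s t : S) (v : V),
      ψ (Quot.mk _ ((u, s), (t, v))) = (u, s * t, v) := fun _ _ _ _ => rfl
  -- associativity of mul
  have massoc : ∀ q r w, mul (mul q r) w = mul q (mul r w) := by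
    intro q r w
    induction q using Quot.ind with | mk q =>
    induction r using Quot.ind with | mk r =>
    induction w using Quot.ind with | mk w =>
    obtain ⟨⟨u1, s1⟩, t1, v1⟩ := q
    obtain ⟨⟨u2, s2⟩, t2, v2⟩ := r
    obtain ⟨⟨u3, s3⟩, t3, v3⟩ := w
    simp [hmul, reesLact, reesBr, mul_assoc]
  refine ⟨ψ, hspec, ?_, ?_, ?_, ?_⟩
  · -- surjectivity
    rintro ⟨u, s, v⟩
    obtain ⟨c, d, rfl⟩ := hfact s
    exact ⟨Quot.mk _ ((u, c), (d, v)), rfl⟩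
  · -- homomorphism
    intro x y
    induction x using Quot.ind with | mk q =>
    induction y using Quot.ind with | mk r =>
    obtain ⟨⟨u, s⟩, t, v⟩ := q
    obtain ⟨⟨u', s'⟩, t', v'⟩ := r
    rw [hmul]
    simp [hψdef, reesLact, reesBr, reesMul, mul_assoc]
  · -- strict local isomorphism
    rintro a b ⟨x0, hx0⟩ ⟨y0, hy0⟩ x y hψeq
    have key : ∀ z w, ψ z = ψ w → mul (mul x0 z) y0 = mul (mul x0 w) y0 := by
      intro z w hzw
      induction x0 using Quot.ind with | mk q0 =>
      induction y0 using Quot.ind with | mk q1 =>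
      induction z using Quot.ind with | mk z =>
      induction w using Quot.ind with | mk w =>
      obtain ⟨⟨u0, s0⟩, t0, v0⟩ := q0
      obtain ⟨⟨u1, s1⟩, t1, v1⟩ := q1
      obtain ⟨⟨Z1, Z2⟩, Z3, Z4⟩ := z
      obtain ⟨⟨W1, W2⟩, W3, W4⟩ := w
      have hzw' : (Z1, Z2 * Z3, Z4) = ((W1 : U), W2 * W3, W4) := hzw
      obtain ⟨h1, h23, h4⟩ : Z1 = W1 ∧ Z2 * Z3 = W2 * W3 ∧ Z4 = W4 := by
        simpa [Prod.ext_iff] using hzw'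
      subst h1; subst h4
      rw [hmul u0 s0 t0 v0 Z1 Z2 Z3 Z4, hmul u0 s0 t0 v0 Z1 W2 W3 Z4]
      show mul (Quot.mk _ ((u0, s0), (t0 * p v0 Z1 * Z2 * Z3, Z4))) _ =
        mul (Quot.mk _ ((u0, s0), (t0 * p v0 Z1 * W2 * W3, Z4))) _
      rw [hmul u0 s0 (t0 * p v0 Z1 * Z2 * Z3) Z4 u1 s1 t1 v1,
        hmul u0 s0 (t0 * p v0 Z1 * W2 * W3) Z4 u1 s1 t1 v1]
      show Quot.mk _ ((u0, s0), ((t0 * p v0 Z1 * Z2 * Z3 * p Z4 u1 * s1) * t1, v1)) =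
        Quot.mk _ ((u0, s0), ((t0 * p v0 Z1 * W2 * W3 * p Z4 u1 * s1) * t1, v1))
      rw [tensorShift, tensorShift]
      have hm : s0 * (t0 * p v0 Z1 * Z2 * Z3 * p Z4 u1 * s1) =
          s0 * (t0 * p v0 Z1 * W2 * W3 * p Z4 u1 * s1) := by
        simp only [mul_assoc]
        rw [← mul_assoc Z2 Z3, h23, mul_assoc]
      rw [hm]
    have e1 : ∀ c, mul (mul a c) b = mul (mul x0 (mul (mul a c) b)) y0 := by
      intro c
      conv_lhs => rw [← hx0, ← hy0]
      rw [massoc x0 a c, massoc, ← massoc (mul a c) b y0, ← massoc]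
    rw [e1 x, e1 y]
    exact key _ _ hψeq
  · -- idempotents lift
    rintro ⟨u, s, v⟩ hm
    have hs : s * p v u * s = s := congrArg (fun z => z.2.1) hm
    refine ⟨Quot.mk _ ((u, s), (p v u * s, v)), ?_, ?_⟩
    · rw [hmul]
      have hbr : reesBr p (p v u * s, v) (u, s) = p v u * s := by
        show p v u * s * p v u * s = p v u * s
        calc p v u * s * p v u * s = p v u * (s * p v u * s) := by simp [mul_assoc]
          _ = p v u * s := by rw [hs]
      rw [hbr]
      show Quot.mk _ ((u, s), ((p v u * s) * (p v u * s), v)) =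
        Quot.mk _ ((u, s), (p v u * s, v))
      rw [tensorShift]
      have : s * (p v u * s) = s := by rw [← mul_assoc, hs]
      rw [this]
    · show (u, s * (p v u * s), v) = (u, s, v)
      rw [← mul_assoc, hs]
end

section
/- Let S be a firm semigroup and M = M(S; U, V; p) a Rees matrix semigroup over S. Then the map ψ : (U × S) ⊗_S (S × V) → M, (u,s) ⊗ (t,v) ↦ (u, st, v), is a semigroup isomorphism, where the tensor product carries the Morita semigroup multiplication induced by ⟨(s,v),(u,s')⟩ := s p(v,u) s'. -/
/-- For a firm semigroup `S` and Rees matrix semigroup `M = M(S; U, V; p)`,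
the map `ψ : (U × S) ⊗_S (S × V) → M`, `(u,s) ⊗ (t,v) ↦ (u, st, v)`, is a semigroup
isomorphism, where the tensor product carries the Morita multiplication induced by
`⟨(s,v),(u,s')⟩ = s p(v,u) s'`. -/
theorem stmt9 {S U V : Type*} [Semigroup S] (p : V → U → S)
    (hfirm : IsFirm S)
    (mul : Quot (TensorRelR (reesRact U) (reesLact V)) →
      Quot (TensorRelR (reesRact U) (reesLact V)) →
      Quot (TensorRelR (reesRact U) (reesLact V)))
    (hmul : ∀ (u : U) (s t : S) (v : V) (u' : U) (s' t' : S) (v' : V),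
      mul (Quot.mk _ ((u, s), (t, v))) (Quot.mk _ ((u', s'), (t', v'))) =
        Quot.mk _ ((u, s), reesLact V (reesBr p (t, v) (u', s')) (t', v'))) :
    ∃ ψ : Quot (TensorRelR (reesRact U) (reesLact V)) → U × S × V,
      (∀ (u : U) (s t : S) (v : V), ψ (Quot.mk _ ((u, s), (t, v))) = (u, s * t, v)) ∧
      Function.Bijective ψ ∧
      (∀ x y, ψ (mul x y) = reesMul p (ψ x) (ψ y)) := by
  classical
  -- ψ via Quot.lift
  refine ⟨Quot.lift (fun x => (x.1.1, x.1.2 * x.2.1, x.2.2)) ?_, fun u s t v => rfl, ?_, ?_⟩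
  · rintro _ _ ⟨a, m, b, rfl, rfl⟩
    simp [reesRact, reesLact, mul_assoc]
  · constructor
    · -- injectivity
      intro x y h
      obtain ⟨⟨⟨u, s⟩, t, v⟩, rfl⟩ := Quot.exists_rep x
      obtain ⟨⟨⟨u', s'⟩, t', v'⟩, rfl⟩ := Quot.exists_rep y
      simp only [Quot.lift_mk] at h
      obtain ⟨hu, hst, hv⟩ : u = u' ∧ s * t = s' * t' ∧ v = v' := by
        refine ⟨congrArg Prod.fst h, congrArg (fun z => z.2.1) h, congrArg (fun z => z.2.2) h⟩
      subst hu; subst hv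
      have hq : Quot.mk (TensorRelR ((· * ·) : S → S → S) ((· * ·) : S → S → S)) (s, t)
          = Quot.mk _ (s', t') := hfirm.1 hst
      have key : ∀ (φ : Quot (TensorRelR ((· * ·) : S → S → S) ((· * ·) : S → S → S)) →
          Quot (TensorRelR (reesRact U (S := S)) (reesLact V (S := S)))), φ (Quot.mk _ (s, t)) = φ (Quot.mk _ (s', t')) :=
        fun φ => congrArg φ hq
      have := key (Quot.lift (fun x => Quot.mk (TensorRelR (reesRact U) (reesLact V)) ((u, x.1), (x.2, v)))
        (by rintro _ _ ⟨a, m, b, rfl, rfl⟩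
            exact Quot.sound ⟨(u, a), m, (b, v), rfl, rfl⟩))
      simpa using this
    · -- surjectivity
      rintro ⟨u, s, v⟩
      obtain ⟨z, hz⟩ := hfirm.2 s
      obtain ⟨⟨a, b⟩, rfl⟩ := Quot.exists_rep z
      exact ⟨Quot.mk _ ((u, a), (b, v)), by simpa [firmMap] using congrArg (fun w => (u, w, v)) hz⟩
  · -- homomorphism
    intro x y
    obtain ⟨⟨⟨u, s⟩, t, v⟩, rfl⟩ := Quot.exists_rep x
    obtain ⟨⟨⟨u', s'⟩, t', v'⟩, rfl⟩ := Quot.exists_rep y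
    rw [hmul]
    simp [reesLact, reesBr, reesMul, mul_assoc]
end

section
/- Let β = (A, B, ⟨,⟩) be a pair over a semigroup S. The set Ω₁^β of adjoint pairs (ρ, σ) ∈ Ω^β such that ρ(A) ⊆ Sa for some a ∈ A and σ(B) ⊆ bS for some b ∈ B is a two-sided ideal of the monoid Ω^β. -/
/-- The monoid `Ω^β` of adjoint pairs of endomorphisms of the pair
`β = (A, B, ⟨,⟩)` over `S`. -/
def pairOmega {S A B : Type*} [Semigroup S] (lA : S → A → A) (rB : B → S → B)
    (br : A → B → S) : Set ((A → A) × (B → B)) :=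
  {x | (∀ (s : S) (a : A), x.1 (lA s a) = lA s (x.1 a)) ∧
       (∀ (b : B) (s : S), x.2 (rB b s) = rB (x.2 b) s) ∧
       (∀ (a : A) (b : B), br (x.1 a) b = br a (x.2 b))}

/-- The multiplication `(ρ, σ)(ρ', σ') = (ρ'ρ, σσ')` on pairs of endomorphisms. -/
def omul {A B : Type*} (x y : (A → A) × (B → B)) : (A → A) × (B → B) :=
  (y.1 ∘ x.1, x.2 ∘ y.2)

/-- The ideal `Ω₁^β` of adjoint pairs of rank one: `ρ(A) ⊆ Sa₀` and `σ(B) ⊆ b₀S`. -/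
def pairOmega1 {S A B : Type*} [Semigroup S] (lA : S → A → A) (rB : B → S → B)
    (br : A → B → S) : Set ((A → A) × (B → B)) :=
  {x | x ∈ pairOmega lA rB br ∧
       (∃ a₀ : A, ∀ a : A, ∃ s : S, x.1 a = lA s a₀) ∧
       (∃ b₀ : B, ∀ b : B, ∃ s : S, x.2 b = rB b₀ s)}

/-- The adjoint pair `[b, a] = (⟨−, b⟩a, b⟨a, −⟩)`. -/
def pairBrkt {S A B : Type*} [Semigroup S] (lA : S → A → A) (rB : B → S → B)
    (br : A → B → S) (b : B) (a : A) : (A → A) × (B → B) :=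
  (fun x => lA (br x b) a, fun y => rB b (br a y))

/-- The set `Σ^β` of all pairs of the form `[b, a]`. -/
def pairSigma {S A B : Type*} [Semigroup S] (lA : S → A → A) (rB : B → S → B)
    (br : A → B → S) : Set ((A → A) × (B → B)) :=
  {x | ∃ (b : B) (a : A), x = pairBrkt lA rB br b a}

/-- For a pair `β = (A, B, ⟨,⟩)` over a semigroup `S`, the set `Ω₁^β` of
adjoint pairs of rank one is a two-sided ideal of the monoid `Ω^β`. -/
theorem stmt11 {S A B : Type*} [Semigroup S]
    (lA : S → A → A) (rB : B → S → B) (br : A → B → S)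
    (hlA : ∀ (s s' : S) (a : A), lA (s * s') a = lA s (lA s' a))
    (hrB : ∀ (b : B) (s s' : S), rB (rB b s) s' = rB b (s * s'))
    (hbrl : ∀ (s : S) (a : A) (b : B), br (lA s a) b = s * br a b)
    (hbrr : ∀ (a : A) (b : B) (s : S), br a (rB b s) = br a b * s) :
    ∀ x ∈ pairOmega1 lA rB br, ∀ y ∈ pairOmega lA rB br,
      omul x y ∈ pairOmega1 lA rB br ∧ omul y x ∈ pairOmega1 lA rB br := by
  rintro ⟨ρ, σ⟩ ⟨⟨hx1, hx2, hx3⟩, ⟨a₀, ha⟩, ⟨b₀, hb⟩⟩ ⟨ρ', σ'⟩ ⟨hy1, hy2, hy3⟩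
  dsimp only at hx1 hx2 hx3 ha hb hy1 hy2 hy3
  constructor
  · refine ⟨⟨?_, ?_, ?_⟩, ⟨ρ' a₀, ?_⟩, ⟨b₀, ?_⟩⟩
    · intro s a; simp only [omul, Function.comp_apply, hx1, hy1]
    · intro b s; simp only [omul, Function.comp_apply, hx2, hy2]
    · intro a b; simp only [omul, Function.comp_apply, hy3, hx3]
    · intro a
      obtain ⟨s, hs⟩ := ha a
      exact ⟨s, by simp only [omul, Function.comp_apply, hs, hy1]⟩
    · intro b
      obtain ⟨s, hs⟩ := hb (σ' b)
      exact ⟨s, by simpa only [omul, Function.comp_apply] using hs⟩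
  · refine ⟨⟨?_, ?_, ?_⟩, ⟨a₀, ?_⟩, ⟨σ' b₀, ?_⟩⟩
    · intro s a; simp only [omul, Function.comp_apply, hx1, hy1]
    · intro b s; simp only [omul, Function.comp_apply, hx2, hy2]
    · intro a b; simp only [omul, Function.comp_apply, hy3, hx3]
    · intro a
      obtain ⟨s, hs⟩ := ha (ρ' a)
      exact ⟨s, by simpa only [omul, Function.comp_apply] using hs⟩
    · intro b
      obtain ⟨s, hs⟩ := hb b
      exact ⟨s, by simp only [omul, Function.comp_apply, hs, hy2]⟩
end

section
/- Let β = (A, B, ⟨,⟩) be a dual pair over a semigroup S with weak local units. Then Σ^β = Ω₁^β, i.e., every adjoint pair (ρ, σ) with ρ(A) contained in a cyclic subact Sa₁ and σ(B) contained in a cyclic subact b'S is of the form (⟨−, b⟩a, b⟨a, −⟩) for some a ∈ A, b ∈ B. -/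
/-- For a dual pair `β = (A, B, ⟨,⟩)` over a semigroup `S` with weak local
units, `Σ^β = Ω₁^β`. -/
theorem stmt13 {S A B : Type*} [Semigroup S]
    (lA : S → A → A) (rB : B → S → B) (br : A → B → S)
    (hlA : ∀ (s s' : S) (a : A), lA (s * s') a = lA s (lA s' a))
    (hrB : ∀ (b : B) (s s' : S), rB (rB b s) s' = rB b (s * s'))
    (hbrl : ∀ (s : S) (a : A) (b : B), br (lA s a) b = s * br a b)
    (hbrr : ∀ (a : A) (b : B) (s : S), br a (rB b s) = br a b * s)
    (hwlu : ∀ s : S, ∃ u v : S, u * s = s ∧ s * v = s)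
    (hdual1 : ∀ a : A, ∃ a' : A, (∃ s : S, a = lA s a') ∧ (∀ s : S, ∃ b : B, br a' b = s))
    (hdual2 : ∀ b : B, ∃ b' : B, (∃ s : S, b = rB b' s) ∧ (∀ s : S, ∃ a : A, br a b' = s)) :
    pairSigma lA rB br = pairOmega1 lA rB br := by
  ext x
  constructor
  · rintro ⟨b, a, rfl⟩
    refine ⟨⟨?_, ?_, ?_⟩, ⟨a, fun c => ⟨br c b, rfl⟩⟩, ⟨b, fun d => ⟨br a d, rfl⟩⟩⟩
    · intro s c
      simp only [pairBrkt, hbrl, hlA]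
    · intro d s
      simp only [pairBrkt, hbrr, hrB]
    · intro c d
      simp only [pairBrkt, hbrl, hbrr, mul_assoc]
  · rintro ⟨⟨hρ, hσ, hadj⟩, ⟨a₁, hA⟩, ⟨b₁, hB⟩⟩
    obtain ⟨a', ⟨t, ha₁⟩, hsurjA⟩ := hdual1 a₁
    obtain ⟨b', ⟨t', hb₁⟩, hsurjB⟩ := hdual2 b₁
    obtain ⟨_, v, _, htv⟩ := hwlu t
    obtain ⟨u, _, hut', _⟩ := hwlu t'
    obtain ⟨yv, hyv⟩ := hsurjA v
    obtain ⟨xu, hxu⟩ := hsurjB u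
    obtain ⟨rv, hrv⟩ := hB yv
    set z : S := t' * rv with hz
    have hσyv : x.2 yv = rB b' z := by rw [hrv, hb₁, hrB]
    have key1 : ∀ c : A, x.1 c = lA (br c b' * z) a' := by
      intro c
      obtain ⟨s, hs⟩ := hA c
      have h1 : x.1 c = lA (s * t) a' := by rw [hs, ha₁, hlA]
      have h2 : br (x.1 c) yv = s * t := by
        rw [h1, hbrl, hyv, mul_assoc, htv]
      have h3 : br c (x.2 yv) = br c b' * z := by rw [hσyv, hbrr]
      rw [h1, ← h2, hadj, h3]
    have huz : u * z = z := by rw [hz, ← mul_assoc, hut']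
    have ha : x.1 xu = lA z a' := by rw [key1, hxu, huz]
    have key2 : ∀ d : B, x.2 d = rB b' (br (lA z a') d) := by
      intro d
      obtain ⟨r, hr⟩ := hB d
      have h1 : x.2 d = rB b' (t' * r) := by rw [hr, hb₁, hrB]
      have h2 : br xu (x.2 d) = t' * r := by
        rw [h1, hbrr, hxu, ← mul_assoc, hut']
      rw [h1, ← h2, ← hadj, ha]
    refine ⟨b', lA z a', ?_⟩
    have e1 : x.1 = fun c => lA (br c b') (lA z a') := by
      funext c
      rw [key1, hlA]
    have e2 : x.2 = fun d => rB b' (br (lA z a') d) := by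
      funext d
      exact key2 d
    exact Prod.ext e1 e2
end

section
/- Let β = (A, B, ⟨,⟩) be a dual pair over a semigroup S with weak local units. Then the Morita semigroup B ⊗_S A with multiplication (b ⊗ a)(b' ⊗ a') := b ⊗ ⟨a, b'⟩a' has weak local units: for every b ⊗ a ∈ B ⊗_S A there exist elements x, y ∈ B ⊗_S A with x(b ⊗ a) = b ⊗ a = (b ⊗ a)y. -/
/-- For a dual pair `β = (A, B, ⟨,⟩)` over a semigroup `S` with weak local
units, the Morita semigroup `B ⊗_S A` with `(b ⊗ a)(b' ⊗ a') = b ⊗ ⟨a, b'⟩a'` has weak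
local units. -/
theorem stmt14 {S A B : Type*} [Semigroup S]
    (lA : S → A → A) (rB : B → S → B) (br : A → B → S)
    (hlA : ∀ (s s' : S) (a : A), lA (s * s') a = lA s (lA s' a))
    (hrB : ∀ (b : B) (s s' : S), rB (rB b s) s' = rB b (s * s'))
    (hbrl : ∀ (s : S) (a : A) (b : B), br (lA s a) b = s * br a b)
    (hbrr : ∀ (a : A) (b : B) (s : S), br a (rB b s) = br a b * s)
    (hwlu : ∀ s : S, ∃ u v : S, u * s = s ∧ s * v = s)
    (hdual1 : ∀ a : A, ∃ a' : A, (∃ s : S, a = lA s a') ∧ (∀ s : S, ∃ b : B, br a' b = s))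
    (hdual2 : ∀ b : B, ∃ b' : B, (∃ s : S, b = rB b' s) ∧ (∀ s : S, ∃ a : A, br a b' = s))
    (mul : Quot (TensorRelR rB lA) → Quot (TensorRelR rB lA) → Quot (TensorRelR rB lA))
    (hmul : ∀ (b : B) (a : A) (b' : B) (a' : A),
      mul (Quot.mk _ (b, a)) (Quot.mk _ (b', a')) = Quot.mk _ (b, lA (br a b') a')) :
    ∀ x : Quot (TensorRelR rB lA), ∃ y z : Quot (TensorRelR rB lA),
      mul y x = x ∧ mul x z = x := by
  intro x
  induction x using Quot.ind with
  | _ p =>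
    obtain ⟨b, a⟩ := p
    obtain ⟨a', ⟨s, has⟩, hsur1⟩ := hdual1 a
    obtain ⟨b', ⟨t, hbt⟩, hsur2⟩ := hdual2 b
    obtain ⟨u, _, hu, -⟩ := hwlu t
    obtain ⟨-, v, -, hv⟩ := hwlu s
    obtain ⟨a₁, ha₁⟩ := hsur2 u
    obtain ⟨b₂, hb₂⟩ := hsur1 v
    refine ⟨Quot.mk _ (b', a₁), Quot.mk _ (b₂, a'), ?_, ?_⟩
    · rw [hmul]
      have hbr : br a₁ b = t := by rw [hbt, hbrr, ha₁, hu]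
      rw [hbr, hbt]
      exact (Quot.sound (show TensorRelR rB lA (rB b' t, a) (b', lA t a) from ⟨b', t, a, rfl, rfl⟩)).symm
    · rw [hmul]
      have hbr : br a b₂ = s := by rw [has, hbrl, hb₂, hv]
      rw [hbr, ← has]
end

section
/- Let β = (A, B, ⟨,⟩) be a dual pair over a semigroup S with local units. Then the Morita semigroup B ⊗_S A has local units: for every b ⊗ a there exist idempotents e, f ∈ B ⊗_S A with f(b ⊗ a) = b ⊗ a = (b ⊗ a)e. -/
/-- For a dual pair `β = (A, B, ⟨,⟩)` over a semigroup `S` with local units,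
the Morita semigroup `B ⊗_S A` has local units. -/
theorem stmt15 {S A B : Type*} [Semigroup S]
    (lA : S → A → A) (rB : B → S → B) (br : A → B → S)
    (hlA : ∀ (s s' : S) (a : A), lA (s * s') a = lA s (lA s' a))
    (hrB : ∀ (b : B) (s s' : S), rB (rB b s) s' = rB b (s * s'))
    (hbrl : ∀ (s : S) (a : A) (b : B), br (lA s a) b = s * br a b)
    (hbrr : ∀ (a : A) (b : B) (s : S), br a (rB b s) = br a b * s)
    (hlu : ∀ s : S, ∃ e f : S, e * e = e ∧ f * f = f ∧ f * s = s ∧ s * e = s)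
    (hdual1 : ∀ a : A, ∃ a' : A, (∃ s : S, a = lA s a') ∧ (∀ s : S, ∃ b : B, br a' b = s))
    (hdual2 : ∀ b : B, ∃ b' : B, (∃ s : S, b = rB b' s) ∧ (∀ s : S, ∃ a : A, br a b' = s))
    (mul : Quot (TensorRelR rB lA) → Quot (TensorRelR rB lA) → Quot (TensorRelR rB lA))
    (hmul : ∀ (b : B) (a : A) (b' : B) (a' : A),
      mul (Quot.mk _ (b, a)) (Quot.mk _ (b', a')) = Quot.mk _ (b, lA (br a b') a')) :
    ∀ x : Quot (TensorRelR rB lA), ∃ e f : Quot (TensorRelR rB lA),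
      mul e e = e ∧ mul f f = f ∧ mul f x = x ∧ mul x e = x := by
  intro x
  induction x using Quot.ind with
  | mk p =>
  obtain ⟨b, a⟩ := p
  -- right local unit e
  obtain ⟨a', ⟨s, ha⟩, hsur⟩ := hdual1 a
  obtain ⟨eS, _, heS, _, _, hse⟩ := hlu s
  obtain ⟨b₀, hb₀⟩ := hsur eS
  -- left local unit f
  obtain ⟨b', ⟨t, hb⟩, hsur2⟩ := hdual2 b
  obtain ⟨_, fS, _, hfS, hft, _⟩ := hlu t
  obtain ⟨a₀, ha₀⟩ := hsur2 fS
  refine ⟨Quot.mk _ (b₀, lA eS a'), Quot.mk _ (rB b' fS, lA fS a₀), ?_, ?_, ?_, ?_⟩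
  · rw [hmul, hbrl, hb₀, heS, ← hlA, heS]
  · rw [hmul, hbrl, hbrr, ha₀, hfS, hfS, ← hlA, hfS]
  · rw [hmul, hb, hbrl, hbrr, ha₀, ← mul_assoc, hfS, hft]
    have key : TensorRelR rB lA (rB (rB b' fS) t, a) (rB b' fS, lA t a) :=
      ⟨rB b' fS, t, a, rfl, rfl⟩
    have := Quot.sound key
    rw [hrB, hft] at this
    exact this.symm
  · rw [hmul, ha, hbrl, hb₀, ← hlA, mul_assoc, heS, hse]
end

section
/- For any pair β = (A, B, ⟨,⟩) over a nonempty semigroup S, the map φ : B ⊗_S A → Σ^β, b ⊗ a ↦ [b, a], is a well-defined surjective strict local isomorphism of semigroups along which idempotents lift. -/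
/-- Auxiliary: the map `φ : B ⊗_S A → (A → A) × (B → B)`, `b ⊗ a ↦ [b, a]`,
well-defined on the tensor product. -/
def myPhi {S A B : Type*} [Semigroup S] (lA : S → A → A) (rB : B → S → B)
    (br : A → B → S)
    (hlA : ∀ (s s' : S) (a : A), lA (s * s') a = lA s (lA s' a))
    (hrB : ∀ (b : B) (s s' : S), rB (rB b s) s' = rB b (s * s'))
    (hbrl : ∀ (s : S) (a : A) (b : B), br (lA s a) b = s * br a b)
    (hbrr : ∀ (a : A) (b : B) (s : S), br a (rB b s) = br a b * s) :
    Quot (TensorRelR rB lA) → (A → A) × (B → B) :=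
  Quot.lift (fun p => pairBrkt lA rB br p.1 p.2) (by
    rintro p q ⟨b, s, a, rfl, rfl⟩
    unfold pairBrkt
    simp only [Prod.mk.injEq]
    constructor
    · funext x
      simp only [hbrr, hlA]
    · funext y
      simp only [hrB, hbrl])

/-- For any pair `β = (A, B, ⟨,⟩)` over a nonempty semigroup `S`, the map
`φ : B ⊗_S A → Σ^β`, `b ⊗ a ↦ [b, a]`, is a well-defined surjective strict local
isomorphism of semigroups along which idempotents lift. -/
theorem stmt16 {S A B : Type*} [Semigroup S] [Nonempty S]
    (lA : S → A → A) (rB : B → S → B) (br : A → B → S)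
    (hlA : ∀ (s s' : S) (a : A), lA (s * s') a = lA s (lA s' a))
    (hrB : ∀ (b : B) (s s' : S), rB (rB b s) s' = rB b (s * s'))
    (hbrl : ∀ (s : S) (a : A) (b : B), br (lA s a) b = s * br a b)
    (hbrr : ∀ (a : A) (b : B) (s : S), br a (rB b s) = br a b * s)
    (mul : Quot (TensorRelR rB lA) → Quot (TensorRelR rB lA) → Quot (TensorRelR rB lA))
    (hmul : ∀ (b : B) (a : A) (b' : B) (a' : A),
      mul (Quot.mk _ (b, a)) (Quot.mk _ (b', a')) = Quot.mk _ (b, lA (br a b') a')) :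
    ∃ φ : Quot (TensorRelR rB lA) → (A → A) × (B → B),
      (∀ (b : B) (a : A), φ (Quot.mk _ (b, a)) = pairBrkt lA rB br b a) ∧
      Set.range φ = pairSigma lA rB br ∧
      (∀ x y, φ (mul x y) = omul (φ x) (φ y)) ∧
      (∀ a b, (∃ x, mul x a = a) → (∃ y, mul b y = b) →
        ∀ x y, φ (mul (mul a x) b) = φ (mul (mul a y) b) →
          mul (mul a x) b = mul (mul a y) b) ∧
      (∀ z ∈ pairSigma lA rB br, omul z z = z →
        ∃ x, mul x x = x ∧ φ x = z) := by
  -- the bracket map is a homomorphism for the Morita multiplication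
  have hom : ∀ (b : B) (a : A) (b' : B) (a' : A),
      pairBrkt lA rB br b (lA (br a b') a') =
        omul (pairBrkt lA rB br b a) (pairBrkt lA rB br b' a') := by
    intro b a b' a'
    unfold pairBrkt omul
    simp only [Prod.mk.injEq]
    constructor
    · funext x
      simp only [Function.comp_apply, hbrl, hlA]
    · funext y
      simp only [Function.comp_apply, hbrr, hbrl]
  refine ⟨myPhi lA rB br hlA hrB hbrl hbrr, fun b a => rfl, ?_, ?_, ?_, ?_⟩
  · -- range φ = Σ^β
    ext z
    constructor
    · rintro ⟨x, rfl⟩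
      obtain ⟨⟨b, a⟩, rfl⟩ := Quot.exists_rep x
      exact ⟨b, a, rfl⟩
    · rintro ⟨b, a, rfl⟩
      exact ⟨Quot.mk _ (b, a), rfl⟩
  · -- homomorphism
    intro x y
    obtain ⟨⟨b, a⟩, rfl⟩ := Quot.exists_rep x
    obtain ⟨⟨b', a'⟩, rfl⟩ := Quot.exists_rep y
    rw [hmul]
    exact hom b a b' a'
  · -- strict local injectivity
    intro aQ bQ _ hb x y hphi
    obtain ⟨q, hq⟩ := hb
    obtain ⟨⟨bq, aq⟩, rfl⟩ := Quot.exists_rep q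
    obtain ⟨⟨bb, ab⟩, rfl⟩ := Quot.exists_rep bQ
    obtain ⟨⟨ba, aa⟩, rfl⟩ := Quot.exists_rep aQ
    obtain ⟨⟨bx, ax⟩, rfl⟩ := Quot.exists_rep x
    obtain ⟨⟨by', ay⟩, rfl⟩ := Quot.exists_rep y
    rw [hmul] at hq
    -- two canonical representatives of b
    have hb2 : Quot.mk (TensorRelR rB lA) (bb, lA (br ab bq) aq) = Quot.mk _ (bb, ab) := hq
    have hb3 : Quot.mk (TensorRelR rB lA) (bb, lA (br ab bq * br aq bq) aq) =
        Quot.mk _ (bb, ab) := by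
      have h := congrArg (fun z => mul z (Quot.mk (TensorRelR rB lA) (bq, aq))) hb2
      simp only [hmul] at h
      rw [hbrl] at h
      exact h.trans hb2
    -- the key computation: any product `(mk (ba, c)) * b` is determined by `φ` of it
    have keylem : ∀ c : A,
        mul (Quot.mk (TensorRelR rB lA) (ba, c)) (Quot.mk _ (bb, ab)) =
          Quot.mk _
            ((myPhi lA rB br hlA hrB hbrl hbrr
              (mul (Quot.mk (TensorRelR rB lA) (ba, c)) (Quot.mk _ (bb, ab)))).2 bq, aq) := by
      intro c
      have hA : mul (Quot.mk (TensorRelR rB lA) (ba, c)) (Quot.mk _ (bb, ab)) =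
          Quot.mk _ (ba, lA (br c bb * br ab bq) aq) := by
        rw [← hb2, hmul]
        simp only [hlA]
      have hB : mul (Quot.mk (TensorRelR rB lA) (ba, c)) (Quot.mk _ (bb, ab)) =
          Quot.mk _ (ba, lA (br c bb * br ab bq * br aq bq) aq) := by
        rw [← hb3, hmul]
        simp only [mul_assoc, hlA]
      have hphiu : (myPhi lA rB br hlA hrB hbrl hbrr
          (mul (Quot.mk (TensorRelR rB lA) (ba, c)) (Quot.mk _ (bb, ab)))).2 bq =
          rB ba (br c bb * br ab bq * br aq bq) := by
        rw [hA]
        show rB ba (br (lA (br c bb * br ab bq) aq) bq) = _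
        rw [hbrl]
      have hsound : Quot.mk (TensorRelR rB lA)
          (rB ba (br c bb * br ab bq * br aq bq), aq) =
          Quot.mk _ (ba, lA (br c bb * br ab bq * br aq bq) aq) :=
        Quot.sound ⟨ba, _, aq, rfl, rfl⟩
      rw [hphiu, hsound]
      exact hB
    simp only [hmul] at hphi
    rw [hmul ba aa bx ax, keylem (lA (br aa bx) ax),
        hmul ba (lA (br aa bx) ax) bb ab,
        hmul ba aa by' ay, keylem (lA (br aa by') ay),
        hmul ba (lA (br aa by') ay) bb ab, hphi]
  · -- idempotents lift
    rintro z ⟨b, a, rfl⟩ hz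
    have h2 : rB b (br a b * br a b) = rB b (br a b) := by
      have h := congrFun (congrArg Prod.snd hz) b
      simpa [omul, pairBrkt, Function.comp, hbrr] using h
    refine ⟨Quot.mk _ (b, lA (br a b) a), ?_, ?_⟩
    · -- idempotency of the lift
      rw [hmul, hbrl, ← hlA]
      have e1 : Quot.mk (TensorRelR rB lA) (rB b (br a b * br a b * br a b), a) =
          Quot.mk _ (b, lA (br a b * br a b * br a b) a) :=
        Quot.sound ⟨b, _, a, rfl, rfl⟩
      have e2 : Quot.mk (TensorRelR rB lA) (rB b (br a b), a) =
          Quot.mk _ (b, lA (br a b) a) :=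
        Quot.sound ⟨b, _, a, rfl, rfl⟩
      have h3 : rB b (br a b * br a b * br a b) = rB b (br a b) := by
        rw [← hrB, h2, hrB, h2]
      rw [← e1, h3, e2]
    · exact (hom b a b a).trans hz
end

section
/- Let S be a semigroup with weak local units and β = (A, B, ⟨,⟩) a dual pair over S. Then the map φ : B ⊗_S A → Σ^β, b ⊗ a ↦ [b, a], is a semigroup isomorphism. -/
/-- For a dual pair `β = (A, B, ⟨,⟩)` over a semigroup `S` with weak local
units, the map `φ : B ⊗_S A → Σ^β`, `b ⊗ a ↦ [b, a]`, is a semigroup isomorphism. -/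
theorem stmt17 {S A B : Type*} [Semigroup S]
    (lA : S → A → A) (rB : B → S → B) (br : A → B → S)
    (hlA : ∀ (s s' : S) (a : A), lA (s * s') a = lA s (lA s' a))
    (hrB : ∀ (b : B) (s s' : S), rB (rB b s) s' = rB b (s * s'))
    (hbrl : ∀ (s : S) (a : A) (b : B), br (lA s a) b = s * br a b)
    (hbrr : ∀ (a : A) (b : B) (s : S), br a (rB b s) = br a b * s)
    (hwlu : ∀ s : S, ∃ u v : S, u * s = s ∧ s * v = s)
    (hdual1 : ∀ a : A, ∃ a' : A, (∃ s : S, a = lA s a') ∧ (∀ s : S, ∃ b : B, br a' b = s))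
    (hdual2 : ∀ b : B, ∃ b' : B, (∃ s : S, b = rB b' s) ∧ (∀ s : S, ∃ a : A, br a b' = s))
    (mul : Quot (TensorRelR rB lA) → Quot (TensorRelR rB lA) → Quot (TensorRelR rB lA))
    (hmul : ∀ (b : B) (a : A) (b' : B) (a' : A),
      mul (Quot.mk _ (b, a)) (Quot.mk _ (b', a')) = Quot.mk _ (b, lA (br a b') a')) :
    ∃ φ : Quot (TensorRelR rB lA) → (A → A) × (B → B),
      (∀ (b : B) (a : A), φ (Quot.mk _ (b, a)) = pairBrkt lA rB br b a) ∧
      (∀ x y, φ (mul x y) = omul (φ x) (φ y)) ∧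
      Function.Injective φ ∧
      Set.range φ = pairSigma lA rB br := by
  have hwd : ∀ p q, TensorRelR rB lA p q →
      pairBrkt lA rB br p.1 p.2 = pairBrkt lA rB br q.1 q.2 := by
    rintro _ _ ⟨c, s, a, rfl, rfl⟩
    unfold pairBrkt
    refine Prod.ext ?_ ?_ <;> funext x
    · simp [hbrr, hlA]
    · simp [hrB, hbrl]
  refine ⟨Quot.lift (fun p => pairBrkt lA rB br p.1 p.2) hwd, fun b a => rfl, ?_, ?_, ?_⟩
  · intro x y
    induction x using Quot.ind with | _ p => ?_
    induction y using Quot.ind with | _ q => ?_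
    obtain ⟨b, a⟩ := p; obtain ⟨b', a'⟩ := q
    rw [hmul]
    show pairBrkt lA rB br b (lA (br a b') a') = omul (pairBrkt lA rB br b a) (pairBrkt lA rB br b' a')
    unfold pairBrkt omul
    refine Prod.ext ?_ ?_ <;> funext x
    · simp [Function.comp, hbrl, hlA]
    · simp [Function.comp, hbrl, hbrr, hrB]
  · intro x y h
    induction x using Quot.ind with | _ p => ?_
    induction y using Quot.ind with | _ q => ?_
    obtain ⟨b, a⟩ := p; obtain ⟨b', a'⟩ := q
    simp only [Quot.lift_mk] at h
    have h1 : ∀ x, lA (br x b) a = lA (br x b') a' := fun x => congrFun (congrArg Prod.fst h) x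
    have h2 : ∀ y, rB b (br a y) = rB b' (br a' y) := fun y => congrFun (congrArg Prod.snd h) y
    obtain ⟨b₀, ⟨s₀, hb⟩, sur₀⟩ := hdual2 b
    obtain ⟨a₀', ⟨s', ha'⟩, sur'⟩ := hdual1 a'
    obtain ⟨u, v, hu, hv⟩ := hwlu s₀
    obtain ⟨u', v', hu', hv'⟩ := hwlu s'
    obtain ⟨a₁, ha₁⟩ := sur₀ u
    obtain ⟨b₁, hb₁⟩ := sur' v'
    have e1 : br a₁ b = s₀ := by rw [hb, hbrr, ha₁, hu]
    have e2 : br a' b₁ = s' := by rw [ha', hbrl, hb₁, hv']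
    have key : br a₁ b' * s' = s₀ * br a b₁ := by
      rw [← e2, ← hbrr, ← h2 b₁, hbrr, e1]
    have e3 : rB (rB b₀ (br a₁ b')) s' = rB b' s' := by
      rw [hrB, key, ← hrB, ← hb, h2 b₁, e2]
    calc Quot.mk (TensorRelR rB lA) (b, a)
        = Quot.mk _ (rB b₀ s₀, a) := by rw [← hb]
      _ = Quot.mk _ (b₀, lA s₀ a) := Quot.sound ⟨b₀, s₀, a, rfl, rfl⟩
      _ = Quot.mk _ (b₀, lA (br a₁ b') a') := by rw [← e1, h1]
      _ = Quot.mk _ (rB b₀ (br a₁ b'), a') := (Quot.sound ⟨b₀, br a₁ b', a', rfl, rfl⟩).symm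
      _ = Quot.mk _ (rB b₀ (br a₁ b'), lA s' a₀') := by rw [← ha']
      _ = Quot.mk _ (rB (rB b₀ (br a₁ b')) s', a₀') :=
          (Quot.sound ⟨rB b₀ (br a₁ b'), s', a₀', rfl, rfl⟩).symm
      _ = Quot.mk _ (rB b' s', a₀') := by rw [e3]
      _ = Quot.mk _ (b', lA s' a₀') := Quot.sound ⟨b', s', a₀', rfl, rfl⟩
      _ = Quot.mk _ (b', a') := by rw [← ha']
  · ext x
    constructor
    · rintro ⟨q, rfl⟩
      induction q using Quot.ind with | _ p => exact ⟨p.1, p.2, rfl⟩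
    · rintro ⟨b, a, rfl⟩
      exact ⟨Quot.mk _ (b, a), rfl⟩
end
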